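/- For every integer k ≥ 0, the optimal value of problem (B) with budget k (i.e., the maximum of ∑_{b∈L} E(r_b,t_b) over assignments t : L → ℕ with ∑_{b∈L} t_b = k) equals the maximum of ∑_{b∈L} ∑_{j∈S_b} (1-p)·β_p(j,r_b) over all families (S_b)_{b∈L} of finite subsets of ℕ with ∑_{b∈L} |S_b| = k; that is, the optimal value is the sum of the largest k elements of the multiset ⨄_{b∈L} {(1-p)·β_p(j,r_b) : j ∈ ℕ}. -/

import Mathlib

/-!
Writing `q = 1 - p`, Pascal's rule gives `E(r, t+1) = E(r, t) + q β_p(t, r)`, so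
`E(r, t) = ∑_{j<t} q β_p(j, r)` and `β_p(·, r)` is antitone. Hence an assignment `t` realizes the
family `S_b = {0, …, t_b - 1}`, and conversely replacing each `S_b` by `{0, …, |S_b| - 1}` can only
increase the objective, so both problems have the same optimum.
-/

/-- `betaP p t r = ∑_{i=0}^{r-1} C(t,i) (1-p)^i p^(t-i)`. -/
noncomputable def betaP (p : ℝ) (t r : ℕ) : ℝ :=
  ∑ i ∈ Finset.range r, (t.choose i : ℝ) * (1 - p) ^ i * p ^ (t - i)

/-- Expected rank function `E(r,t) = ∑_{i=0}^{t} C(t,i) (1-p)^i p^(t-i) * min{i,r}`. -/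
noncomputable def expRank (p : ℝ) (r t : ℕ) : ℝ :=
  ∑ i ∈ Finset.range (t + 1),
    (t.choose i : ℝ) * (1 - p) ^ i * p ^ (t - i) * ((min i r : ℕ) : ℝ)

open Finset

noncomputable def binomWeight (p : ℝ) (t i : ℕ) : ℝ :=
  (t.choose i : ℝ) * (1 - p) ^ i * p ^ (t - i)

section BinomWeight

variable (p : ℝ)

theorem binomWeight_of_lt {t i : ℕ} (h : t < i) : binomWeight p t i = 0 := by
  simp [binomWeight, Nat.choose_eq_zero_of_lt h]

theorem binomWeight_succ_zero (t : ℕ) : binomWeight p (t + 1) 0 = p * binomWeight p t 0 := by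
  simp [binomWeight, pow_succ, mul_comm]

theorem binomWeight_succ_succ (t i : ℕ) :
    binomWeight p (t + 1) (i + 1) = p * binomWeight p t (i + 1) + (1 - p) * binomWeight p t i := by
  rcases lt_trichotomy i t with h | rfl | h
  · obtain ⟨d, rfl⟩ := Nat.exists_eq_add_of_lt h
    simp only [binomWeight, Nat.choose_succ_succ', show i + d + 1 + 1 - (i + 1) = d + 1 by omega,
      show i + d + 1 - (i + 1) = d by omega, show i + d + 1 - i = d + 1 by omega]
    push_cast
    ring
  · simp [binomWeight, pow_succ, mul_comm]
  · simp [binomWeight_of_lt p h, binomWeight_of_lt p (Nat.lt_add_right 1 h),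
      binomWeight_of_lt p (Nat.add_lt_add_right h 1)]

variable {p} in
theorem binomWeight_nonneg (hp0 : 0 ≤ p) (hp1 : p ≤ 1) (t i : ℕ) : 0 ≤ binomWeight p t i := by
  have : 0 ≤ 1 - p := sub_nonneg.2 hp1
  unfold binomWeight
  positivity

end BinomWeight

section BetaP

variable (p : ℝ)

theorem betaP_eq_sum_binomWeight (t r : ℕ) :
    betaP p t r = ∑ i ∈ range r, binomWeight p t i := rfl

theorem betaP_eq_sum_ite (t r : ℕ) :
    betaP p t r = ∑ i ∈ range (t + 1), if i < r then binomWeight p t i else 0 := by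
  rw [← sum_filter, betaP_eq_sum_binomWeight]
  refine (sum_subset (fun i hi => ?_) fun i hi hi' => binomWeight_of_lt p ?_).symm
  · simp only [mem_filter, mem_range] at hi ⊢
    exact hi.2
  · simp only [mem_filter, mem_range, not_and, not_lt] at hi hi'
    omega

theorem betaP_succ_succ (t r : ℕ) :
    betaP p (t + 1) (r + 1) = p * betaP p t (r + 1) + (1 - p) * betaP p t r := by
  simp only [betaP_eq_sum_binomWeight, sum_range_succ' _ r, binomWeight_succ_succ,
    binomWeight_succ_zero, sum_add_distrib, mul_add, mul_sum]
  ring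

variable {p}

theorem betaP_succ_le (hp0 : 0 ≤ p) (hp1 : p ≤ 1) (t r : ℕ) : betaP p (t + 1) r ≤ betaP p t r := by
  cases r with
  | zero => simp [betaP]
  | succ r =>
    have hr : betaP p t r ≤ betaP p t (r + 1) := by
      rw [betaP_eq_sum_binomWeight, betaP_eq_sum_binomWeight, sum_range_succ]
      exact le_add_of_nonneg_right (binomWeight_nonneg hp0 hp1 t r)
    rw [betaP_succ_succ]
    nlinarith

theorem betaP_antitone (hp0 : 0 ≤ p) (hp1 : p ≤ 1) (r : ℕ) : Antitone (betaP p · r) :=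
  antitone_nat_of_succ_le (betaP_succ_le hp0 hp1 · r)

end BetaP

section ExpRank

variable (p : ℝ)

theorem expRank_eq_sum_binomWeight (r t : ℕ) :
    expRank p r t = ∑ i ∈ range (t + 1), binomWeight p t i * ((min i r : ℕ) : ℝ) := rfl

theorem expRank_succ (r t : ℕ) :
    expRank p r (t + 1) = expRank p r t + (1 - p) * betaP p t r := by
  set m : ℕ → ℝ := fun i => ((min i r : ℕ) : ℝ)
  have hm : ∀ i, m (i + 1) = m i + if i < r then 1 else 0 := by
    intro i
    split_ifs <;> simp only [m] <;> norm_cast <;> omega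
  have hshift : ∑ i ∈ range (t + 1), binomWeight p t (i + 1) * m (i + 1) = expRank p r t := by
    conv_rhs => rw [expRank_eq_sum_binomWeight, sum_range_succ']
    rw [sum_range_succ, binomWeight_of_lt p (lt_add_one t)]
    simp [m]
  calc expRank p r (t + 1)
      = ∑ i ∈ range (t + 1), binomWeight p (t + 1) (i + 1) * m (i + 1) := by
        rw [expRank_eq_sum_binomWeight, sum_range_succ']
        simp [m]
    _ = p * ∑ i ∈ range (t + 1), binomWeight p t (i + 1) * m (i + 1)
          + (1 - p) * ∑ i ∈ range (t + 1), binomWeight p t i * m (i + 1) := by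
        simp only [binomWeight_succ_succ, add_mul, sum_add_distrib, mul_sum, mul_assoc]
    _ = p * expRank p r t + (1 - p) * (expRank p r t + betaP p t r) := by
        rw [hshift, betaP_eq_sum_ite, expRank_eq_sum_binomWeight, ← sum_add_distrib]
        simp only [hm, mul_add, mul_ite, mul_one, mul_zero, m]
    _ = expRank p r t + (1 - p) * betaP p t r := by ring

theorem expRank_eq_sum_betaP (r t : ℕ) :
    expRank p r t = ∑ j ∈ range t, (1 - p) * betaP p j r := by
  induction t with
  | zero => simp [expRank]
  | succ t ih => rw [expRank_succ, ih, sum_range_succ]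

end ExpRank

theorem Finset.sum_le_sum_range_card_of_antitone {M : Type*} [AddCommMonoid M] [PartialOrder M]
    [IsOrderedAddMonoid M] {f : ℕ → M} (hf : Antitone f) (T : Finset ℕ) :
    ∑ j ∈ T, f j ≤ ∑ j ∈ range #T, f j := by
  induction T using Finset.induction_on_max with
  | empty => simp
  | insert a s ha ih =>
    have has : a ∉ s := fun h => lt_irrefl a (ha a h)
    have hcard : #s ≤ a := by
      simpa using card_le_card (fun x hx => mem_range.2 (ha x hx) : s ⊆ range a)
    rw [sum_insert has, card_insert_of_notMem has, sum_range_succ, add_comm]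
    exact add_le_add ih (hf hcard)

theorem Finset.exists_isGreatest_sum_of_sum_eq {ι M : Type*} [AddCommMonoid M] [LinearOrder M]
    {L : Finset ι} (hL : L.Nonempty) (g : ι → ℕ → M) (k : ℕ) :
    ∃ v, IsGreatest {x | ∃ t : ι → ℕ, ∑ b ∈ L, t b = k ∧ x = ∑ b ∈ L, g b (t b)} v := by
  classical
  obtain ⟨b₀, hb₀⟩ := hL
  obtain ⟨t₀, ht₀, hmax⟩ := (piAntidiag L k).exists_max_image (fun t => ∑ b ∈ L, g b (t b))
    ⟨Pi.single b₀ k, mem_piAntidiag.2 ⟨by simp [sum_pi_single', hb₀], fun b hb => by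
      rw [Pi.single_apply] at hb
      split_ifs at hb with h
      exacts [h ▸ hb₀, absurd rfl hb]⟩⟩
  refine ⟨_, ⟨t₀, (mem_piAntidiag.1 ht₀).1, rfl⟩, ?_⟩
  rintro _ ⟨t, ht, rfl⟩
  have hrestrict := hmax (fun b => if b ∈ L then t b else 0)
    (mem_piAntidiag.2 ⟨by rwa [sum_ite_mem, inter_self], fun b hb => by by_contra h; simp [h] at hb⟩)
  rwa [sum_congr rfl fun b hb => by rw [if_pos hb]] at hrestrict

theorem stmt14 {ι : Type*} (p : ℝ) (hp0 : 0 < p) (hp1 : p < 1)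
    (L : Finset ι) (hL : L.Nonempty) (r : ι → ℕ) (k : ℕ) :
    ∃ v : ℝ,
      IsGreatest {x : ℝ | ∃ t : ι → ℕ, (∑ b ∈ L, t b) = k ∧
        x = ∑ b ∈ L, expRank p (r b) (t b)} v ∧
      IsGreatest {x : ℝ | ∃ S : ι → Finset ℕ, (∑ b ∈ L, (S b).card) = k ∧
        x = ∑ b ∈ L, ∑ j ∈ S b, (1 - p) * betaP p j (r b)} v := by
  obtain ⟨v, hv⟩ := exists_isGreatest_sum_of_sum_eq hL (fun b => expRank p (r b)) k
  refine ⟨v, hv, ?_, ?_⟩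
  · obtain ⟨t, ht, rfl⟩ := hv.1
    exact ⟨fun b => range (t b), by simpa using ht, by simp only [expRank_eq_sum_betaP]⟩
  · rintro _ ⟨S, hS, rfl⟩
    calc ∑ b ∈ L, ∑ j ∈ S b, (1 - p) * betaP p j (r b)
        ≤ ∑ b ∈ L, expRank p (r b) #(S b) := sum_le_sum fun b _ => by
          rw [expRank_eq_sum_betaP]
          exact sum_le_sum_range_card_of_antitone
            ((betaP_antitone hp0.le hp1.le (r b)).const_mul (sub_nonneg.2 hp1.le)) (S b)
      _ ≤ v := hv.2 ⟨fun b => #(S b), hS, rfl⟩
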